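/- Let α > 1 and consider the graph ℤ with vertex weight m ≡ 1 and edge weight c(n, n+1) = α^{|n|}. Then: (i) for every finitely supported f : ℤ → ℝ, ((√α − 1)²/4) Σ_{n∈ℤ} f(n)² ≤ Σ_{n∈ℤ} α^{|n|}·(f(n) − f(n+1))² (this follows by taking A(n,n+1) = α^{n/2} for n ≥ 0 and A(n,n+1) = −α^{−n/2} for n ≤ −1, which satisfies A(n,n+1) − A(n−1,n) ≥ √α − 1 and A(n,n+1)² = α^{|n|}); in particular 0 is not an eigenvalue of the 0-form Laplacian Δ₀ on ℓ²(ℤ). (ii) Σ_{n∈ℤ} α^{−|n|} < ∞, hence there is a nonzero square-summable (with weight c) solution of δψ = 0, so 0 is an eigenvalue of the 1-form Laplacian Δ₁. -/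

import Mathlib

/-!
(i) is a discrete Hardy inequality obtained by summation by parts: if `A n ^ 2 ≤ c n` and
`κ ≤ A n - A (n - 1)`, then `κ ∑ f n² ≤ ∑ A n (f n - f (n+1)) (f n + f (n+1))`, which
Cauchy–Schwarz bounds by `√(∑ c n (f n - f (n+1))²) · 2 √(∑ f n²)`.

For any positive weights the flux `c n (f (n+1) - f n)` of a function in the kernel of `Δ₀` is
constant, so the function is monotone; if it is in `ℓ²` it tends to `0` at both ends, hence
vanishes. Conversely `ψ = 1 / c` has constant flux `1` and weighted norm `∑ 1 / c`.
-/

open Filter Function Topology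

theorem finsum_mul_sq_le_sq_mul_sq {ι R : Type*} [CommRing R] [LinearOrder R]
    [IsStrictOrderedRing R] {a b : ι → R} (ha : a.HasFiniteSupport) (hb : b.HasFiniteSupport) :
    (∑ᶠ i, a i * b i) ^ 2 ≤ (∑ᶠ i, a i ^ 2) * ∑ᶠ i, b i ^ 2 := by
  set s := (ha.union hb).toFinset
  have hsa : support a ⊆ s := by simp [s]
  have hsb : support b ⊆ s := by simp [s]
  rw [finsum_eq_sum_of_support_subset _ ((support_mul_subset_left a b).trans hsa),
    finsum_eq_sum_of_support_subset _ ((support_pow a two_ne_zero).trans_subset hsa),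
    finsum_eq_sum_of_support_subset _ ((support_pow b two_ne_zero).trans_subset hsb)]
  exact Finset.sum_mul_sq_le_sq_mul_sq s a b

theorem Function.HasFiniteSupport.of_vanishing_of_succ {M N : Type*} [Zero M] [Zero N] {f : ℤ → M}
    (hf : f.HasFiniteSupport) {g : ℤ → N} (hg : ∀ n, f n = 0 → f (n + 1) = 0 → g n = 0) :
    g.HasFiniteSupport :=
  (hf.union (hf.comp_of_injective (add_left_injective 1))).subset fun n hn => by
    by_contra h
    simp only [Set.mem_union, mem_support, comp_apply, not_or, not_not] at h
    exact hn (hg n h.1 h.2)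

theorem finsum_comp_add_right {G M : Type*} [AddGroup G] [AddCommMonoid M] (g : G → M) (a : G) :
    ∑ᶠ x, g (x + a) = ∑ᶠ x, g x :=
  finsum_comp_equiv (Equiv.addRight a)

section FinitelySupported

variable {f : ℤ → ℝ}

theorem finsum_by_parts_sq (hf : f.HasFiniteSupport) (A : ℤ → ℝ) :
    ∑ᶠ n, (A n - A (n - 1)) * f n ^ 2 = ∑ᶠ n, A n * (f n - f (n + 1)) * (f n + f (n + 1)) := calc
  _ = ∑ᶠ n, A n * f n ^ 2 - ∑ᶠ n, A (n - 1) * f n ^ 2 := by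
    simp only [sub_mul]
    exact finsum_sub_distrib (hf.of_vanishing_of_succ fun n h _ => by simp [h])
      (hf.of_vanishing_of_succ fun n h _ => by simp [h])
  _ = ∑ᶠ n, A n * f n ^ 2 - ∑ᶠ n, A n * f (n + 1) ^ 2 := by
    rw [← finsum_comp_add_right (fun n => A (n - 1) * f n ^ 2) 1]
    simp only [add_sub_cancel_right]
  _ = _ := by
    rw [← finsum_sub_distrib (hf.of_vanishing_of_succ fun n h _ => by simp [h])
      (hf.of_vanishing_of_succ fun n _ h => by simp [h])]
    exact finsum_congr fun n => by ring

theorem finsum_add_succ_sq_le (hf : f.HasFiniteSupport) :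
    ∑ᶠ n, (f n + f (n + 1)) ^ 2 ≤ 4 * ∑ᶠ n, f n ^ 2 := calc
  _ ≤ ∑ᶠ n, (2 * f n ^ 2 + 2 * f (n + 1) ^ 2) :=
    finsum_le_finsum' (hf.of_vanishing_of_succ fun n h h' => by simp [h, h'])
      (hf.of_vanishing_of_succ fun n h h' => by simp [h, h'])
      fun n => by nlinarith [sq_nonneg (f n - f (n + 1))]
  _ = 2 * ∑ᶠ n, f n ^ 2 + 2 * ∑ᶠ n, f (n + 1) ^ 2 := by
    rw [finsum_add_distrib (hf.of_vanishing_of_succ fun n h _ => by simp [h])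
      (hf.of_vanishing_of_succ fun n _ h => by simp [h]), mul_finsum, mul_finsum]
  _ = _ := by
    rw [finsum_comp_add_right (fun n => f n ^ 2) 1]
    ring

theorem hardy_inequality_of_le_sub (hf : f.HasFiniteSupport) {c A : ℤ → ℝ} {κ : ℝ} (hκ : 0 ≤ κ)
    (hA : ∀ n, A n ^ 2 ≤ c n) (hgap : ∀ n, κ ≤ A n - A (n - 1)) :
    κ ^ 2 / 4 * ∑ᶠ n, f n ^ 2 ≤ ∑ᶠ n, c n * (f n - f (n + 1)) ^ 2 := by
  set S := ∑ᶠ n, f n ^ 2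
  set Q := ∑ᶠ n, c n * (f n - f (n + 1)) ^ 2
  have hS : 0 ≤ S := finsum_nonneg fun n => sq_nonneg _
  have h_parts : κ * S ≤ ∑ᶠ n, A n * (f n - f (n + 1)) * (f n + f (n + 1)) := calc
    κ * S = ∑ᶠ n, κ * f n ^ 2 := mul_finsum _ _
    _ ≤ ∑ᶠ n, (A n - A (n - 1)) * f n ^ 2 :=
      finsum_le_finsum' (hf.of_vanishing_of_succ fun n h _ => by simp [h])
        (hf.of_vanishing_of_succ fun n h _ => by simp [h])
        fun n => mul_le_mul_of_nonneg_right (hgap n) (sq_nonneg _)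
    _ = _ := finsum_by_parts_sq hf A
  have h_cs := finsum_mul_sq_le_sq_mul_sq
    (hf.of_vanishing_of_succ (g := fun n => A n * (f n - f (n + 1))) fun n h h' => by simp [h, h'])
    (hf.of_vanishing_of_succ (g := fun n => f n + f (n + 1)) fun n h h' => by simp [h, h'])
  have h_grad : ∑ᶠ n, (A n * (f n - f (n + 1))) ^ 2 ≤ Q :=
    finsum_le_finsum' (hf.of_vanishing_of_succ fun n h h' => by simp [h, h'])
      (hf.of_vanishing_of_succ fun n h h' => by simp [h, h'])
      fun n => by
        simp only [mul_pow]
        exact mul_le_mul_of_nonneg_right (hA n) (sq_nonneg _)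
  have hQ : 0 ≤ Q := (finsum_nonneg fun n => sq_nonneg _).trans h_grad
  have key : (κ * S) ^ 2 ≤ Q * (4 * S) :=
    (pow_le_pow_left₀ (mul_nonneg hκ hS) h_parts 2).trans (h_cs.trans
      (mul_le_mul h_grad (finsum_add_succ_sq_le hf) (finsum_nonneg fun n => sq_nonneg _) hQ))
  rcases hS.eq_or_lt with h0 | hpos
  · rw [← h0, mul_zero]
    exact hQ
  · nlinarith

end FinitelySupported

noncomputable def signedSqrtPow (α : ℝ) (n : ℤ) : ℝ :=
  if 0 ≤ n then √α ^ n.natAbs else -√α ^ n.natAbs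

theorem signedSqrtPow_natCast (α : ℝ) (k : ℕ) : signedSqrtPow α k = √α ^ k := by
  simp [signedSqrtPow]

theorem signedSqrtPow_sq {α : ℝ} (hα : 0 ≤ α) (n : ℤ) : signedSqrtPow α n ^ 2 = α ^ n.natAbs := by
  rw [signedSqrtPow, apply_ite (· ^ 2), neg_sq, ite_self, ← pow_mul, mul_comm, pow_mul,
    Real.sq_sqrt hα]

theorem sqrt_sub_one_le_signedSqrtPow_sub {α : ℝ} (hα : 1 ≤ α) (n : ℤ) :
    √α - 1 ≤ signedSqrtPow α n - signedSqrtPow α (n - 1) := by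
  have hs : 1 ≤ √α := Real.one_le_sqrt.2 hα
  rcases n with (_ | k) | k
  · simp [signedSqrtPow]
    linarith
  · rw [Int.ofNat_eq_natCast, show ((k + 1 : ℕ) : ℤ) - 1 = k by omega, signedSqrtPow_natCast,
      signedSqrtPow_natCast, pow_succ]
    nlinarith [one_le_pow₀ (n := k) hs]
  · rw [Int.negSucc_sub_one, signedSqrtPow, signedSqrtPow]
    simp only [Int.negSucc_not_nonneg, if_false, Int.natAbs_negSucc, sub_neg_eq_add]
    rw [Nat.succ_eq_add_one, Nat.succ_eq_add_one, pow_succ _ (k + 1)]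
    nlinarith [one_le_pow₀ (n := k + 1) hs]

theorem Monotone.eq_of_tendsto_cofinite {α : Type*} [TopologicalSpace α] [PartialOrder α]
    [OrderClosedTopology α] {f : ℤ → α} {a : α} (hmono : Monotone f)
    (hf : Tendsto f cofinite (𝓝 a)) (n : ℤ) : f n = a := by
  rw [Int.cofinite_eq, tendsto_sup] at hf
  exact le_antisymm (hmono.ge_of_tendsto hf.2 n) (hmono.le_of_tendsto hf.1 n)

theorem Antitone.eq_of_tendsto_cofinite {α : Type*} [TopologicalSpace α] [PartialOrder α]
    [OrderClosedTopology α] {f : ℤ → α} {a : α} (hanti : Antitone f)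
    (hf : Tendsto f cofinite (𝓝 a)) (n : ℤ) : f n = a :=
  hanti.dual_right.eq_of_tendsto_cofinite hf n

theorem Summable.tendsto_cofinite_zero_of_sq {ι : Type*} {f : ι → ℝ}
    (hf : Summable fun i => f i ^ 2) : Tendsto f cofinite (𝓝 0) := by
  rw [tendsto_zero_iff_abs_tendsto_zero]
  simpa only [comp_def, Real.sqrt_sq_eq_abs, Real.sqrt_zero] using hf.tendsto_cofinite_zero.sqrt

theorem flux_eq_of_harmonic {c f : ℤ → ℝ}
    (hharm : ∀ n, c (n - 1) * (f n - f (n - 1)) + c n * (f n - f (n + 1)) = 0) (n : ℤ) :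
    c n * (f (n + 1) - f n) = c 0 * (f 1 - f 0) := by
  have hper : Periodic (fun n => c n * (f (n + 1) - f n)) 1 := fun n => by
    have := hharm (n + 1)
    simp only [add_sub_cancel_right] at this
    linarith
  simpa using hper.int_mul_eq n

theorem eq_zero_of_harmonic_of_tendsto {c f : ℤ → ℝ} (hc : ∀ n, 0 < c n)
    (hharm : ∀ n, c (n - 1) * (f n - f (n - 1)) + c n * (f n - f (n + 1)) = 0)
    (hf : Tendsto f cofinite (𝓝 0)) : f = 0 := by
  have hflux := flux_eq_of_harmonic hharm
  funext n
  rcases le_total 0 (c 0 * (f 1 - f 0)) with hC | hC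
  · refine (monotone_int_of_le_succ fun k => ?_).eq_of_tendsto_cofinite hf n
    exact sub_nonneg.1 (nonneg_of_mul_nonneg_right (hflux k ▸ hC) (hc k))
  · refine (antitone_int_of_succ_le fun k => ?_).eq_of_tendsto_cofinite hf n
    exact sub_nonpos.1 (nonpos_of_mul_nonpos_right (hflux k ▸ hC) (hc k))

theorem summable_pow_natAbs {K : Type*} [NormedRing K] [HasSummableGeomSeries K] {r : K}
    (hr : ‖r‖ < 1) : Summable fun n : ℤ => r ^ n.natAbs :=
  .of_nat_of_neg (by simpa using summable_geometric_of_norm_lt_one hr)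
    (by simpa using summable_geometric_of_norm_lt_one hr)

theorem exists_ne_zero_summable_flux_const {c : ℤ → ℝ} (hc : ∀ n, c n ≠ 0)
    (hs : Summable fun n => 1 / c n) :
    ∃ ψ : ℤ → ℝ, ψ ≠ 0 ∧ (Summable fun n => c n * ψ n ^ 2) ∧
      ∀ n, c (n - 1) * ψ (n - 1) = c n * ψ n := by
  refine ⟨fun n => 1 / c n, fun h => by simpa [hc 0] using congrFun h 0, ?_, fun n => ?_⟩
  · exact hs.congr fun n => by field_simp [hc n]
  · rw [mul_one_div_cancel (hc _), mul_one_div_cancel (hc _)]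

/-- Let `α > 1` and consider the graph `ℤ` with vertex weight `m ≡ 1`
and edge weight `c(n, n+1) = α^{|n|}`.  Then:
(i) for every finitely supported `f : ℤ → ℝ`,
`((√α - 1)²/4) Σ_n f(n)² ≤ Σ_n α^{|n|} (f(n) - f(n+1))²`; in particular `0` is not an
eigenvalue of the 0-form Laplacian `Δ₀` on `ℓ²(ℤ)` (here
`Δ₀ f(n) = α^{|n-1|}(f(n) - f(n-1)) + α^{|n|}(f(n) - f(n+1))`);
(ii) `Σ_n α^{-|n|} < ∞`, hence there is a nonzero solution `ψ` of `δψ = 0` that is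
square-summable with weight `c`, so `0` is an eigenvalue of the 1-form Laplacian `Δ₁`. -/
theorem exponential_weights_zero_spectrum
    (α : ℝ) (hα : 1 < α) :
    -- (i) the spectral gap for `Δ₀` …
    (∀ f : ℤ → ℝ, (Function.support f).Finite →
      ((Real.sqrt α - 1) ^ 2 / 4) * ∑ᶠ n : ℤ, f n ^ 2
        ≤ ∑ᶠ n : ℤ, α ^ n.natAbs * (f n - f (n + 1)) ^ 2) ∧
    -- … and in particular `0` is not an eigenvalue of `Δ₀` on `ℓ²(ℤ)`
    (∀ f : ℤ → ℝ, (Summable fun n : ℤ => f n ^ 2) →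
      (∀ n : ℤ,
        α ^ (n - 1).natAbs * (f n - f (n - 1)) + α ^ n.natAbs * (f n - f (n + 1)) = 0) →
      f = 0) ∧
    -- (ii) `Σ 1/c < ∞` and `0` is an eigenvalue of `Δ₁`: `ker δ ≠ {0}` in `ℓ²(E)`
    (Summable fun n : ℤ => 1 / α ^ n.natAbs) ∧
    (∃ ψ : ℤ → ℝ, ψ ≠ 0 ∧
      (Summable fun n : ℤ => α ^ n.natAbs * ψ n ^ 2) ∧
      (∀ n : ℤ, α ^ (n - 1).natAbs * ψ (n - 1) = α ^ n.natAbs * ψ n)) := by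
  have hα0 : 0 < α := one_pos.trans hα
  have hweight_pos (n : ℤ) : 0 < α ^ n.natAbs := pow_pos hα0 _
  have hsum : Summable fun n : ℤ => 1 / α ^ n.natAbs := by
    have hr : ‖1 / α‖ < 1 := by
      rw [Real.norm_of_nonneg (by positivity), div_lt_one hα0]
      exact hα
    simpa only [one_div_pow] using summable_pow_natAbs hr
  refine ⟨fun f hf => ?_, fun f hf hharm => ?_, hsum,
    exists_ne_zero_summable_flux_const (fun n => (hweight_pos n).ne') hsum⟩
  · exact hardy_inequality_of_le_sub hf (sub_nonneg.2 (Real.one_le_sqrt.2 hα.le))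
      (fun n => (signedSqrtPow_sq hα0.le n).le) (sqrt_sub_one_le_signedSqrtPow_sub hα.le)
  · exact eq_zero_of_harmonic_of_tendsto hweight_pos hharm hf.tendsto_cofinite_zero_of_sq
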